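/- arXiv:1904.02475 — 9 statements merged into one kernel-verified Lean document; each statement's English description precedes it below -/
import Mathlib

section
/- Let 0 < κ < 1, let Y ∈ ℝⁿ and b be a real number with κ|Y| < b < |Y|. Then for every unit vector x ∈ ℝⁿ, the point X = ρ x with ρ = (b - κ² x·Y - √((b - κ² x·Y)² - (1-κ²)(b² - κ²|Y|²)))/(1-κ²) satisfies |X| + κ|X - Y| = b. -/
open scoped RealInnerProductSpace

set_option maxHeartbeats 1600000 in
/-- The polar radius formula parametrizes the Descartes oval
`{X : ‖X‖ + κ‖X - Y‖ = b}` for unit directions `x`. -/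
theorem oval_polar_radius {n : ℕ} (κ b : ℝ) (hκ0 : 0 < κ) (hκ1 : κ < 1)
    (Y : EuclideanSpace ℝ (Fin n)) (hb1 : κ * ‖Y‖ < b) (hb2 : b < ‖Y‖)
    (x : EuclideanSpace ℝ (Fin n)) (hx : ‖x‖ = 1) :
    ‖((b - κ ^ 2 * ⟪x, Y⟫ -
        Real.sqrt ((b - κ ^ 2 * ⟪x, Y⟫) ^ 2 -
          (1 - κ ^ 2) * (b ^ 2 - κ ^ 2 * ‖Y‖ ^ 2))) / (1 - κ ^ 2)) • x‖ +
      κ * ‖((b - κ ^ 2 * ⟪x, Y⟫ -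
        Real.sqrt ((b - κ ^ 2 * ⟪x, Y⟫) ^ 2 -
          (1 - κ ^ 2) * (b ^ 2 - κ ^ 2 * ‖Y‖ ^ 2))) / (1 - κ ^ 2)) • x - Y‖ = b := by
  have hY : 0 < ‖Y‖ := by
    rcases (norm_nonneg Y).lt_or_eq with h | h
    · exact h
    · rw [← h] at hb1 hb2; nlinarith
  have hb0 : 0 < b := lt_trans (by positivity) hb1
  set c : ℝ := ⟪x, Y⟫ with hcdef
  have hcle : |c| ≤ ‖Y‖ := by
    have := abs_real_inner_le_norm x Y
    rwa [hx, one_mul] at this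
  have hc1 : c ≤ ‖Y‖ := (abs_le.mp hcle).2
  have hc2 : -‖Y‖ ≤ c := (abs_le.mp hcle).1
  have hκ2 : 0 < 1 - κ ^ 2 := by nlinarith
  have hκκ : κ ^ 2 * ‖Y‖ < b := by nlinarith [mul_pos hκ0 hY]
  have hA : 0 < b - κ ^ 2 * c := by nlinarith
  have hC : 0 < b ^ 2 - κ ^ 2 * ‖Y‖ ^ 2 := by
    nlinarith [mul_pos (sub_pos.2 hb1) (by positivity : (0:ℝ) < b + κ * ‖Y‖)]
  set D : ℝ := (b - κ ^ 2 * c) ^ 2 - (1 - κ ^ 2) * (b ^ 2 - κ ^ 2 * ‖Y‖ ^ 2) with hDdef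
  have hDnn : 0 ≤ D := by
    rw [hDdef]
    have e1 : 0 ≤ κ ^ 2 * (‖Y‖ - c) := mul_nonneg (sq_nonneg κ) (by linarith)
    have e2 : 0 ≤ 2 * b - κ ^ 2 * (c + ‖Y‖) := by nlinarith [mul_pos hκ0 hY]
    nlinarith [mul_nonneg e1 e2, mul_nonneg (sq_nonneg κ) (sq_nonneg (b - ‖Y‖))]
  set s := Real.sqrt D with hsdef
  have hs0 : 0 ≤ s := Real.sqrt_nonneg D
  have hs2 : s ^ 2 = D := Real.sq_sqrt hDnn
  set ρ : ℝ := (b - κ ^ 2 * c - s) / (1 - κ ^ 2) with hρdef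
  have hρ0 : 0 ≤ ρ := by
    have hsle : s ≤ b - κ ^ 2 * c := by
      have h1 : s ≤ Real.sqrt ((b - κ ^ 2 * c) ^ 2) := by
        apply Real.sqrt_le_sqrt; rw [hDdef]
        nlinarith [mul_pos hκ2 hC]
      rwa [Real.sqrt_sq hA.le] at h1
    exact div_nonneg (by linarith) hκ2.le
  have key : κ ^ 2 * (b - c) ≤ s := by
    rcases le_or_gt (b - c) 0 with h | h
    · nlinarith
    · have hpos : 0 ≤ κ ^ 2 * (b - c) := by positivity
      have h4 : (κ ^ 2 * (b - c)) ^ 2 ≤ s ^ 2 := by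
        rw [hs2, hDdef]
        nlinarith [mul_nonneg (mul_nonneg hκ2.le (sq_nonneg κ)) (sq_nonneg (b - ‖Y‖)),
          mul_nonneg (mul_nonneg (mul_nonneg hκ2.le (sq_nonneg κ)) hb0.le)
            (sub_nonneg.2 hc1)]
      have := Real.sqrt_le_sqrt h4
      rwa [Real.sqrt_sq hpos, Real.sqrt_sq hs0] at this
  have hρb : ρ ≤ b := by
    rw [hρdef, div_le_iff₀ hκ2]
    nlinarith [key]
  have hlin : (1 - κ ^ 2) * ρ = b - κ ^ 2 * c - s := by
    rw [hρdef]; field_simp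
  have hquad : (1 - κ ^ 2) * ρ ^ 2 - 2 * (b - κ ^ 2 * c) * ρ + (b ^ 2 - κ ^ 2 * ‖Y‖ ^ 2) = 0 := by
    have h3 : (1 - κ ^ 2) *
        ((1 - κ ^ 2) * ρ ^ 2 - 2 * (b - κ ^ 2 * c) * ρ + (b ^ 2 - κ ^ 2 * ‖Y‖ ^ 2)) = 0 := by
      linear_combination ((1 - κ ^ 2) * ρ + (b - κ ^ 2 * c - s) - 2 * (b - κ ^ 2 * c)) * hlin
        + hs2 + hDdef
    rcases mul_eq_zero.mp h3 with h | h
    · exact absurd h (by positivity)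
    · exact h
  have hnx : ‖ρ • x‖ = ρ := by
    rw [norm_smul, hx, mul_one, Real.norm_eq_abs, abs_of_nonneg hρ0]
  have hsub : ‖ρ • x - Y‖ ^ 2 = ρ ^ 2 - 2 * (ρ * c) + ‖Y‖ ^ 2 := by
    rw [norm_sub_sq_real, hnx, real_inner_smul_left]
  have hkey : κ * ‖ρ • x - Y‖ = b - ρ := by
    have h1 : (κ * ‖ρ • x - Y‖) ^ 2 = (b - ρ) ^ 2 := by
      rw [mul_pow, hsub]; linear_combination -hquad
    have h2 : 0 ≤ κ * ‖ρ • x - Y‖ := by positivity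
    have h3 : 0 ≤ b - ρ := by linarith
    calc κ * ‖ρ • x - Y‖ = Real.sqrt ((κ * ‖ρ • x - Y‖) ^ 2) := (Real.sqrt_sq h2).symm
      _ = Real.sqrt ((b - ρ) ^ 2) := by rw [h1]
      _ = b - ρ := Real.sqrt_sq h3
  rw [hnx, hkey]; ring
end

section
/- Consider f(B,C) = B - √(B² - C) on the set {(B,C) : B ≥ 0, 0 ≤ C ≤ B²}. Fix (B̄,C̄) in this set and suppose f(B̄,C̄) ≤ B for another point (B,C) in this set. Then f(B,C) ≤ f(B̄,C̄) if and only if C - C̄ ≤ 2(B - B̄)·f(B̄,C̄). -/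
/-- Comparison lemma for `f(B,C) = B - √(B² - C)`, the smaller root of `z² - 2Bz + C = 0`. -/
theorem smaller_root_comparison (B C B' C' : ℝ)
    (hB' : 0 ≤ B') (hC'0 : 0 ≤ C') (hC' : C' ≤ B' ^ 2)
    (hB : 0 ≤ B) (hC0 : 0 ≤ C) (hC : C ≤ B ^ 2)
    (hf : B' - Real.sqrt (B' ^ 2 - C') ≤ B) :
    B - Real.sqrt (B ^ 2 - C) ≤ B' - Real.sqrt (B' ^ 2 - C') ↔
      C - C' ≤ 2 * (B - B') * (B' - Real.sqrt (B' ^ 2 - C')) := by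
  set s := Real.sqrt (B' ^ 2 - C') with hs
  have hs2 : s ^ 2 = B' ^ 2 - C' := Real.sq_sqrt (by linarith)
  have hbt : 0 ≤ B - (B' - s) := by linarith
  have h1 : B - Real.sqrt (B ^ 2 - C) ≤ B' - s ↔ B - (B' - s) ≤ Real.sqrt (B ^ 2 - C) := by
    constructor <;> intro h <;> linarith
  rw [h1, Real.le_sqrt hbt]
  · constructor <;> intro h <;> nlinarith
  · linarith
end

section
/- Consider f(B,C) = B - √(B² - C) on the set {(B,C) : B ≥ 0, 0 ≤ C ≤ B²}. Fix (B̄,C̄) in this set, let (B,C) also be in this set with f(B̄,C̄) ≤ B, and suppose C - C̄ ≤ 2(B - B̄)·f(B̄,C̄) - E for some E ≥ 0. Then f(B,C) ≤ f(B̄,C̄) - E/(B + √(B²-C) - f(B̄,C̄)). -/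
/-- Quantitative comparison lemma for `f(B,C) = B - √(B² - C)`. -/
theorem smaller_root_comparison_quantitative (B C B' C' E : ℝ)
    (hB' : 0 ≤ B') (hC'0 : 0 ≤ C') (hC' : C' ≤ B' ^ 2)
    (hB : 0 ≤ B) (hC0 : 0 ≤ C) (hC : C ≤ B ^ 2)
    (hf : B' - Real.sqrt (B' ^ 2 - C') ≤ B) (hE : 0 ≤ E)
    (h : C - C' ≤ 2 * (B - B') * (B' - Real.sqrt (B' ^ 2 - C')) - E) :
    B - Real.sqrt (B ^ 2 - C) ≤ B' - Real.sqrt (B' ^ 2 - C') -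
      E / (B + Real.sqrt (B ^ 2 - C) - (B' - Real.sqrt (B' ^ 2 - C'))) := by
  set s' := Real.sqrt (B' ^ 2 - C') with hs'
  set s := Real.sqrt (B ^ 2 - C) with hs
  have hs'2 : s' ^ 2 = B' ^ 2 - C' := Real.sq_sqrt (by linarith)
  have hs2 : s ^ 2 = B ^ 2 - C := Real.sq_sqrt (by linarith)
  have hs0 : 0 ≤ s := Real.sqrt_nonneg _
  have hs'0 : 0 ≤ s' := Real.sqrt_nonneg _
  have key : (B - s - (B' - s')) * (B + s - (B' - s')) ≤ -E := by nlinarith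
  have hD : 0 ≤ B + s - (B' - s') := by linarith
  rcases hD.eq_or_lt with hD0 | hDpos
  · have hE0 : E = 0 := by nlinarith
    rw [hE0, ← hD0, div_zero]
    linarith
  · have : E / (B + s - (B' - s')) ≤ (B' - s') - (B - s) := by
      rw [div_le_iff₀ hDpos]; nlinarith
    linarith
end

section
/- Let 0 < κ < 1 and let X₀ ∈ ℝⁿ \ {0}, m ∈ ℝⁿ with |m| = 1, and suppose (X₀/|X₀|)·m ≥ κ. Set Y = X₀ + s·m for some s > 0. Then every X ∈ ℝⁿ with |X| + κ|X - Y| ≤ |X₀| + κ|X₀ - Y| satisfies |X| - κ X·m ≤ |X₀| - κ X₀·m. -/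
open scoped RealInnerProductSpace

/-- The region enclosed by the Descartes oval through `X₀` with focus `Y = X₀ + s•m` is
contained in the region enclosed by the ellipsoid of axis `m` and eccentricity `κ`. -/
theorem oval_enclosed_by_ellipsoid {n : ℕ} (κ : ℝ) (hκ0 : 0 < κ) (hκ1 : κ < 1)
    (X₀ m : EuclideanSpace ℝ (Fin n)) (hX₀ : X₀ ≠ 0) (hm : ‖m‖ = 1)
    (hang : ⟪(‖X₀‖⁻¹ • X₀ : EuclideanSpace ℝ (Fin n)), m⟫ ≥ κ)
    (s : ℝ) (hs : 0 < s) (Y : EuclideanSpace ℝ (Fin n)) (hY : Y = X₀ + s • m)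
    (X : EuclideanSpace ℝ (Fin n))
    (hX : ‖X‖ + κ * ‖X - Y‖ ≤ ‖X₀‖ + κ * ‖X₀ - Y‖) :
    ‖X‖ - κ * ⟪X, m⟫ ≤ ‖X₀‖ - κ * ⟪X₀, m⟫ := by
  have hY0 : ‖X₀ - Y‖ = s := by
    rw [hY]
    simp [norm_smul, abs_of_pos hs, hm]
  have hYm : ⟪Y, m⟫ = ⟪X₀, m⟫ + s := by
    rw [hY, inner_add_left, real_inner_smul_left, real_inner_self_eq_norm_sq, hm]
    ring
  have hcs : ⟪Y - X, m⟫ ≤ ‖X - Y‖ := by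
    calc ⟪Y - X, m⟫ ≤ ‖Y - X‖ * ‖m‖ := real_inner_le_norm _ _
    _ = ‖X - Y‖ := by rw [hm, norm_sub_rev]; ring
  have h1 : ⟪Y, m⟫ - ⟪X, m⟫ ≤ ‖X - Y‖ := by
    rw [← inner_sub_left]; exact hcs
  have := hX
  rw [hY0, hYm] at *
  nlinarith [hκ0.le, mul_le_mul_of_nonneg_left h1 hκ0.le]
end

section
/- Let 0 < κ < 1, X₀ ∈ ℝⁿ \ {0}, x₀ = X₀/|X₀|, m a unit vector with x₀·m ≥ κ, and Y = X₀ + s·m with s > 0. Then for every unit vector x with 1 - κ x·m > 0, the polar radius h(x,Y,X₀) of the oval {X : |X| + κ|X-Y| = |X₀| + κ|X₀-Y|} satisfies h(x,Y,X₀) ≤ |X₀|(1 - κ x₀·m)/(1 - κ x·m). -/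
open scoped RealInnerProductSpace

/-- The polar radius of the Descartes oval through `X₀` with focus `Y = X₀ + s•m` is bounded
by the polar radius of the ellipsoid of axis `m` and eccentricity `κ` through `X₀`. -/
theorem oval_polar_radius_le_ellipsoid {n : ℕ} (κ : ℝ) (hκ0 : 0 < κ) (hκ1 : κ < 1)
    (X₀ m : EuclideanSpace ℝ (Fin n)) (hX₀ : X₀ ≠ 0) (hm : ‖m‖ = 1)
    (hang : ⟪(‖X₀‖⁻¹ • X₀ : EuclideanSpace ℝ (Fin n)), m⟫ ≥ κ)
    (s : ℝ) (hs : 0 < s) (Y : EuclideanSpace ℝ (Fin n)) (hY : Y = X₀ + s • m)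
    (x : EuclideanSpace ℝ (Fin n)) (hx : ‖x‖ = 1) (hxm : 1 - κ * ⟪x, m⟫ > 0)
    (ρ : ℝ) (hρ : 0 < ρ)
    (hoval : ‖ρ • x‖ + κ * ‖ρ • x - Y‖ = ‖X₀‖ + κ * ‖X₀ - Y‖) :
    ρ ≤ ‖X₀‖ * (1 - κ * ⟪(‖X₀‖⁻¹ • X₀ : EuclideanSpace ℝ (Fin n)), m⟫) / (1 - κ * ⟪x, m⟫) := by
  have hr0 : (0:ℝ) < ‖X₀‖ := norm_pos_iff.mpr hX₀
  have hiA : ⟪(‖X₀‖⁻¹ • X₀ : EuclideanSpace ℝ (Fin n)), m⟫ = ‖X₀‖⁻¹ * ⟪X₀, m⟫ :=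
    real_inner_smul_left _ _ _
  rw [hiA, le_div_iff₀ hxm]
  have hnorm1 : ‖ρ • x‖ = ρ := by
    rw [norm_smul, hx, Real.norm_eq_abs, abs_of_pos hρ, mul_one]
  have hnorm2 : ‖X₀ - Y‖ = s := by
    rw [hY]; simp [norm_smul, hm, abs_of_pos hs]
  have hcs : ⟪Y - ρ • x, m⟫ ≤ ‖ρ • x - Y‖ := by
    calc ⟪Y - ρ • x, m⟫ ≤ ‖Y - ρ • x‖ * ‖m‖ := real_inner_le_norm _ _
    _ = ‖ρ • x - Y‖ := by rw [hm, mul_one, norm_sub_rev]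
  have hexp : ⟪Y - ρ • x, m⟫ = ⟪X₀, m⟫ + s - ρ * ⟪x, m⟫ := by
    rw [hY]
    rw [inner_sub_left, inner_add_left, real_inner_smul_left, real_inner_smul_left,
      real_inner_self_eq_norm_sq, hm]
    ring
  have hoval' : ρ + κ * ‖ρ • x - Y‖ = ‖X₀‖ + κ * s := by
    rw [hnorm1, hnorm2] at hoval; exact hoval
  have hkey : κ * (⟪X₀, m⟫ + s - ρ * ⟪x, m⟫) ≤ κ * ‖ρ • x - Y‖ := by
    rw [← hexp]; exact mul_le_mul_of_nonneg_left hcs hκ0.le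
  have h2 : ‖X₀‖ * (1 - κ * (‖X₀‖⁻¹ * ⟪X₀, m⟫)) = ‖X₀‖ - κ * ⟪X₀, m⟫ := by
    field_simp
  rw [h2]
  nlinarith [hkey, hoval']
end

section
/- Let X₀ ∈ ℝⁿ \ {0}, X ∈ ℝⁿ \ {0}, Ȳ ∈ ℝⁿ, and suppose |X| + κ|X - Ȳ| = |X₀| + κ|X₀ - Ȳ| with 0 < κ, and let s̄ = |Ȳ − X₀| > 0, x = X/|X|, x₀ = X₀/|X₀|, m̄ = (Ȳ − X₀)/s̄. Then |X₀|(1 − κ x₀·m̄) − |X|(1 − κ x·m̄) = (κ²|X − X₀|² − (|X| − |X₀|)²)/(2κ s̄). -/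
open scoped RealInnerProductSpace

/-! Write `d = ‖X₀‖ - ‖X‖` and `s = ‖Ȳ - X₀‖`. The oval equation says `κ‖X - Ȳ‖ = d + κ s`,
and the defect equals `d + κ⟪X - X₀, Ȳ - X₀⟫ / s`. Expanding `‖X - Ȳ‖²` around `X₀` expresses
`2⟪X - X₀, Ȳ - X₀⟫` through `‖X - X₀‖²`, `s²` and `‖X - Ȳ‖²`; substituting the squared oval
equation, the terms in `s` cancel and `2κs` times the defect is `κ²‖X - X₀‖² - d²`. -/

section

variable {E : Type*} [NormedAddCommGroup E] [InnerProductSpace ℝ E]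

theorem norm_mul_inner_inv_norm_smul_left (v w : E) : ‖v‖ * ⟪‖v‖⁻¹ • v, w⟫ = ⟪v, w⟫ := by
  rcases eq_or_ne v 0 with rfl | hv
  · simp
  · rw [real_inner_smul_left, mul_inv_cancel_left₀ (norm_ne_zero_iff.mpr hv)]

theorem two_mul_inner_sub_sub (X X₀ Y : E) :
    2 * ⟪X - X₀, Y - X₀⟫ = ‖X - X₀‖ ^ 2 + ‖Y - X₀‖ ^ 2 - ‖X - Y‖ ^ 2 := by
  have h := norm_sub_sq_real (X - X₀) (Y - X₀)
  rw [sub_sub_sub_cancel_right] at h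
  linarith

theorem two_mul_oval_defect_eq {κ : ℝ} {X₀ X Y : E}
    (hoval : ‖X‖ + κ * ‖X - Y‖ = ‖X₀‖ + κ * ‖X₀ - Y‖) :
    2 * κ * ‖Y - X₀‖ * (‖X₀‖ - ‖X‖) + κ ^ 2 * (2 * ⟪X - X₀, Y - X₀⟫) =
      κ ^ 2 * ‖X - X₀‖ ^ 2 - (‖X‖ - ‖X₀‖) ^ 2 := by
  have hfocal : κ * ‖X - Y‖ = ‖X₀‖ - ‖X‖ + κ * ‖Y - X₀‖ := by
    rw [norm_sub_rev Y]; linarith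
  rw [two_mul_inner_sub_sub]
  linear_combination (-(κ * ‖X - Y‖) - (‖X₀‖ - ‖X‖ + κ * ‖Y - X₀‖)) * hfocal

end

theorem oval_defect_identity_general {n : ℕ} (κ : ℝ) (hκ : 0 < κ)
    (X₀ X Ybar : EuclideanSpace ℝ (Fin n))
    (hs : 0 < ‖Ybar - X₀‖)
    (hoval : ‖X‖ + κ * ‖X - Ybar‖ = ‖X₀‖ + κ * ‖X₀ - Ybar‖) :
    ‖X₀‖ * (1 - κ * ⟪(‖X₀‖⁻¹ • X₀ : EuclideanSpace ℝ (Fin n)),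
        (‖Ybar - X₀‖⁻¹ • (Ybar - X₀) : EuclideanSpace ℝ (Fin n))⟫) -
      ‖X‖ * (1 - κ * ⟪(‖X‖⁻¹ • X : EuclideanSpace ℝ (Fin n)),
        (‖Ybar - X₀‖⁻¹ • (Ybar - X₀) : EuclideanSpace ℝ (Fin n))⟫) =
      (κ ^ 2 * ‖X - X₀‖ ^ 2 - (‖X‖ - ‖X₀‖) ^ 2) / (2 * κ * ‖Ybar - X₀‖) := by
  have hdefect : ‖X₀‖ * (1 - κ * ⟪‖X₀‖⁻¹ • X₀, ‖Ybar - X₀‖⁻¹ • (Ybar - X₀)⟫) -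
      ‖X‖ * (1 - κ * ⟪‖X‖⁻¹ • X, ‖Ybar - X₀‖⁻¹ • (Ybar - X₀)⟫) =
      ‖X₀‖ - ‖X‖ + κ * ⟪X - X₀, Ybar - X₀⟫ / ‖Ybar - X₀‖ := by
    rw [real_inner_smul_right, real_inner_smul_right, inner_sub_left]
    linear_combination (-κ * ‖Ybar - X₀‖⁻¹) * norm_mul_inner_inv_norm_smul_left X₀ (Ybar - X₀) +
      (κ * ‖Ybar - X₀‖⁻¹) * norm_mul_inner_inv_norm_smul_left X (Ybar - X₀)
  rw [hdefect, eq_div_iff (by positivity), ← two_mul_oval_defect_eq hoval]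
  field_simp

/-- Algebraic identity for the defect `|X₀|(1 - κ⟨x₀,m̄⟩) - |X|(1 - κ⟨x,m̄⟩)` when
`X` and `X₀` lie on the same Descartes oval with focus `Ybar`. -/
theorem oval_defect_identity {n : ℕ} (κ : ℝ) (hκ : 0 < κ)
    (X₀ X Ybar : EuclideanSpace ℝ (Fin n)) (hX₀ : X₀ ≠ 0) (hX : X ≠ 0)
    (hs : 0 < ‖Ybar - X₀‖)
    (hoval : ‖X‖ + κ * ‖X - Ybar‖ = ‖X₀‖ + κ * ‖X₀ - Ybar‖) :
    ‖X₀‖ * (1 - κ * ⟪(‖X₀‖⁻¹ • X₀ : EuclideanSpace ℝ (Fin n)),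
        (‖Ybar - X₀‖⁻¹ • (Ybar - X₀) : EuclideanSpace ℝ (Fin n))⟫) -
      ‖X‖ * (1 - κ * ⟪(‖X‖⁻¹ • X : EuclideanSpace ℝ (Fin n)),
        (‖Ybar - X₀‖⁻¹ • (Ybar - X₀) : EuclideanSpace ℝ (Fin n))⟫) =
      (κ ^ 2 * ‖X - X₀‖ ^ 2 - (‖X‖ - ‖X₀‖) ^ 2) / (2 * κ * ‖Ybar - X₀‖) :=
  oval_defect_identity_general κ hκ X₀ X Ybar hs hoval
end

section
/- Let x̄, x̂ be unit vectors in ℝⁿ, t ∈ [0,1], x_t = (1−t)x̄ + t x̂, and assume x_t ≠ 0; set x₀ = x_t/|x_t|. Then (1−t)|x̄ − x₀|² + t|x̂ − x₀|² = 2(1 − |x_t|) ≤ 2|x̄ − x̂|². -/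
/-!
For unit vectors `‖a - u‖² = 2 - 2⟪a, u⟫`, so the weighted sum of squared distances to `x₀` is
affine in `a` and equals `2 - 2⟪x_t, x₀⟫ = 2 - 2‖x_t‖`. For the bound,
`1 - ‖x_t‖² = t(1-t)‖x̄ - x̂‖² ≤ ‖x̄ - x̂‖²/4` for every real `t`, and `1 - s ≤ 1 - s²` when
`0 ≤ s ≤ 1`, while `1 - s ≤ 0` when `s ≥ 1`.
-/

open RealInnerProductSpace

variable {E : Type*} [NormedAddCommGroup E] [InnerProductSpace ℝ E]

theorem norm_sub_sq_of_norm_eq_one {a u : E} (ha : ‖a‖ = 1) (hu : ‖u‖ = 1) :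
    ‖a - u‖ ^ 2 = 2 - 2 * ⟪a, u⟫ := by
  rw [norm_sub_sq_real, ha, hu]
  ring

theorem weighted_norm_sub_sq_of_norm_eq_one {a b u : E} (ha : ‖a‖ = 1) (hb : ‖b‖ = 1)
    (hu : ‖u‖ = 1) (t : ℝ) :
    (1 - t) * ‖a - u‖ ^ 2 + t * ‖b - u‖ ^ 2 = 2 * (1 - ⟪(1 - t) • a + t • b, u⟫) := by
  rw [norm_sub_sq_of_norm_eq_one ha hu, norm_sub_sq_of_norm_eq_one hb hu, inner_add_left,
    real_inner_smul_left, real_inner_smul_left]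
  ring

theorem real_inner_inv_norm_smul_self (x : E) : ⟪x, ‖x‖⁻¹ • x⟫ = ‖x‖ := by
  rcases eq_or_ne x 0 with rfl | hx
  · simp
  · rw [real_inner_smul_right, real_inner_self_eq_norm_sq]
    field_simp [norm_ne_zero_iff.mpr hx]

theorem norm_lineMap_sq (a b : E) (t : ℝ) :
    ‖(1 - t) • a + t • b‖ ^ 2 = (1 - t) * ‖a‖ ^ 2 + t * ‖b‖ ^ 2 - t * (1 - t) * ‖a - b‖ ^ 2 := by
  simp only [← real_inner_self_eq_norm_sq, inner_add_left, inner_add_right, inner_sub_left,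
    inner_sub_right, real_inner_smul_left, real_inner_smul_right, real_inner_comm a b]
  ring

theorem one_sub_norm_lineMap_le_of_norm_eq_one {a b : E} (ha : ‖a‖ = 1) (hb : ‖b‖ = 1) (t : ℝ) :
    1 - ‖(1 - t) • a + t • b‖ ≤ ‖a - b‖ ^ 2 / 4 := by
  have hsq := norm_lineMap_sq a b t
  rw [ha, hb] at hsq
  have hweight : t * (1 - t) ≤ 1 / 4 := by nlinarith [sq_nonneg (2 * t - 1)]
  have hs := norm_nonneg ((1 - t) • a + t • b)
  rcases le_total 1 ‖(1 - t) • a + t • b‖ with hs1 | hs1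
  · nlinarith [sq_nonneg ‖a - b‖]
  · nlinarith [mul_le_mul_of_nonneg_right hweight (sq_nonneg ‖a - b‖)]

theorem convex_combination_projection_estimate_general {n : ℕ}
    (xbar xhat : EuclideanSpace ℝ (Fin n)) (hxbar : ‖xbar‖ = 1) (hxhat : ‖xhat‖ = 1)
    (t : ℝ)
    (hxt : (1 - t) • xbar + t • xhat ≠ 0) :
    (1 - t) * ‖xbar - ‖(1 - t) • xbar + t • xhat‖⁻¹ • ((1 - t) • xbar + t • xhat)‖ ^ 2 +
        t * ‖xhat - ‖(1 - t) • xbar + t • xhat‖⁻¹ • ((1 - t) • xbar + t • xhat)‖ ^ 2 =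
      2 * (1 - ‖(1 - t) • xbar + t • xhat‖) ∧
    2 * (1 - ‖(1 - t) • xbar + t • xhat‖) ≤ 2 * ‖xbar - xhat‖ ^ 2 := by
  have hunit : ‖‖(1 - t) • xbar + t • xhat‖⁻¹ • ((1 - t) • xbar + t • xhat)‖ = 1 :=
    norm_smul_inv_norm hxt
  constructor
  · rw [weighted_norm_sub_sq_of_norm_eq_one hxbar hxhat hunit, real_inner_inv_norm_smul_self]
  · linarith [one_sub_norm_lineMap_le_of_norm_eq_one hxbar hxhat t, sq_nonneg ‖xbar - xhat‖]

/-- For unit vectors `x̄, x̂` and the radial projection `x₀` of `x_t = (1−t)x̄ + t x̂` onto the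
sphere, `(1−t)|x̄ − x₀|² + t|x̂ − x₀|² = 2(1 − |x_t|) ≤ 2|x̄ − x̂|²`. -/
theorem convex_combination_projection_estimate {n : ℕ}
    (xbar xhat : EuclideanSpace ℝ (Fin n)) (hxbar : ‖xbar‖ = 1) (hxhat : ‖xhat‖ = 1)
    (t : ℝ) (ht0 : 0 ≤ t) (ht1 : t ≤ 1)
    (hxt : (1 - t) • xbar + t • xhat ≠ 0) :
    (1 - t) * ‖xbar - ‖(1 - t) • xbar + t • xhat‖⁻¹ • ((1 - t) • xbar + t • xhat)‖ ^ 2 +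
        t * ‖xhat - ‖(1 - t) • xbar + t • xhat‖⁻¹ • ((1 - t) • xbar + t • xhat)‖ ^ 2 =
      2 * (1 - ‖(1 - t) • xbar + t • xhat‖) ∧
    2 * (1 - ‖(1 - t) • xbar + t • xhat‖) ≤ 2 * ‖xbar - xhat‖ ^ 2 :=
  convex_combination_projection_estimate_general xbar xhat hxbar hxhat t hxt
end

section
/- Let γ : [a,b] → ℝⁿ be a C² curve with |γ′(t)| = 1 and |γ″(t)| ≤ M₁ for all t, and suppose M₂|t₁ − t₂| ≤ |γ(t₁) − γ(t₂)| for all t₁, t₂ ∈ [a,b]. For t ∈ [a,b] let D_μ(t) be the (n−1)-dimensional disk of radius μ centered at γ(t) in the hyperplane through γ(t) normal to γ′(t), and let N_μ = ∪_{t∈[a,b]} D_μ(t). Then there exist μ₀ > 0 and C > 0 depending only on M₁, M₂, n such that for all 0 < μ ≤ μ₀, the n-dimensional Lebesgue measure of N_μ satisfies Hⁿ(N_μ) ≥ C μ^{n−1} |γ(b) − γ(a)|. -/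
/-!
Let `δ ≤ μ / 3` and let `x` satisfy `|⟪x - γ c, γ' c⟫| ≤ δ / 2` and lie within `μ / 2` of the
tangent line at `γ c`. For `t ∈ [c - δ, c + δ]` the point `x` stays within `μ` of `γ t`, so
`t ↦ ⟪x - γ t, γ' t⟫` has derivative `⟪x - γ t, γ'' t⟫ - 1 ≤ μ M₁ - 1 ≤ -1/2` and vanishes
somewhere: `x` lies on a normal disk. Hence the tube contains a solid cylinder of length `δ` and
radius `μ / 2` around each point of the curve, of volume at least `δ (μ / √n) ^ (n - 1)` (it
contains a box in an orthonormal frame adapted to its axis). For `δ = min ((b - a) / 2) (μ / 3)`,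
cylinders centred at parameters `2 μ / M₂` apart are disjoint by the bi-Lipschitz bound, and
`⌊(b - a - 2 δ) M₂ / (2 μ)⌋ + 1` of them fit; their total volume is a fixed multiple of
`(b - a) μ ^ (n - 1) ≥ ‖γ b - γ a‖ μ ^ (n - 1)`.
-/

open scoped RealInnerProductSpace ENNReal
open MeasureTheory Set Module

section Cylinder

variable {E : Type*} [NormedAddCommGroup E] [InnerProductSpace ℝ E]

def solidCylinder (z e : E) (α β : ℝ) : Set E :=
  {x | |⟪x - z, e⟫| ≤ α ∧ ‖x - z - ⟪x - z, e⟫ • e‖ ≤ β}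

lemma isClosed_solidCylinder (z e : E) (α β : ℝ) : IsClosed (solidCylinder z e α β) :=
  (isClosed_le (by fun_prop) continuous_const : IsClosed {x | |⟪x - z, e⟫| ≤ α}).inter
    (isClosed_le (by fun_prop) continuous_const :
      IsClosed {x | ‖x - z - ⟪x - z, e⟫ • e‖ ≤ β})

lemma solidCylinder_subset_closedBall {z e : E} (he : ‖e‖ = 1) (α β : ℝ) :
    solidCylinder z e α β ⊆ Metric.closedBall z (α + β) := by
  rintro x ⟨hax, hperp⟩
  rw [Metric.mem_closedBall, dist_eq_norm]
  calc ‖x - z‖ = ‖⟪x - z, e⟫ • e + (x - z - ⟪x - z, e⟫ • e)‖ := by rw [add_sub_cancel]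
    _ ≤ |⟪x - z, e⟫| * ‖e‖ + ‖x - z - ⟪x - z, e⟫ • e‖ := by
      grw [norm_add_le, norm_smul, Real.norm_eq_abs]
    _ ≤ α + β := by rw [he, mul_one]; gcongr

lemma disjoint_solidCylinder {z₁ z₂ e₁ e₂ : E} (he₁ : ‖e₁‖ = 1) (he₂ : ‖e₂‖ = 1) {α β : ℝ}
    (h : 2 * (α + β) < ‖z₁ - z₂‖) :
    Disjoint (solidCylinder z₁ e₁ α β) (solidCylinder z₂ e₂ α β) :=
  (Metric.closedBall_disjoint_closedBall (by rwa [dist_eq_norm, ← two_mul])).mono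
    (solidCylinder_subset_closedBall he₁ α β) (solidCylinder_subset_closedBall he₂ α β)

lemma OrthonormalBasis.norm_le_sqrt_card_mul {ι : Type*} [Fintype ι]
    (b : OrthonormalBasis ι ℝ E) {x : E} {ρ : ℝ} (hρ : 0 ≤ ρ) (hx : ∀ i, |⟪b i, x⟫| ≤ ρ) :
    ‖x‖ ≤ √(Fintype.card ι) * ρ :=
  (b.norm_le_card_mul_iSup_norm_inner x).trans <| by
    gcongr
    exact Real.iSup_le (fun i => (Real.norm_eq_abs _).trans_le (hx i)) hρ

variable [FiniteDimensional ℝ E] [MeasurableSpace E] [BorelSpace E]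

lemma OrthonormalBasis.volume_box {ι : Type*} [Fintype ι] (b : OrthonormalBasis ι ℝ E) (z : E)
    (r : ι → ℝ) :
    volume {x : E | ∀ i, |⟪b i, x - z⟫| ≤ r i} = ∏ i, ENNReal.ofReal (2 * r i) := by
  have hmp : MeasurePreserving (fun x => WithLp.ofLp (b.repr (x - z))) :=
    (PiLp.volume_preserving_ofLp ι).comp
      (b.measurePreserving_repr.comp (measurePreserving_sub_right volume z))
  have hbox : {x : E | ∀ i, |⟪b i, x - z⟫| ≤ r i}
      = (fun x => WithLp.ofLp (b.repr (x - z))) ⁻¹' univ.pi fun i => Icc (-r i) (r i) := by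
    ext x
    simp only [mem_ofPred_eq, mem_preimage, mem_univ_pi, mem_Icc, abs_le,
      b.repr_apply_apply]
  rw [hbox, hmp.measure_preimage
    (MeasurableSet.univ_pi fun _ => measurableSet_Icc).nullMeasurableSet, volume_pi_pi]
  simp only [Real.volume_Icc, sub_neg_eq_add, two_mul]

lemma ofReal_le_volume_solidCylinder (z : E) {e : E} (he : ‖e‖ = 1) (α : ℝ) {β : ℝ}
    (hβ : 0 ≤ β) :
    ENNReal.ofReal (2 * α * (2 * β / √(finrank ℝ E)) ^ (finrank ℝ E - 1))
      ≤ volume (solidCylinder z e α β) := by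
  classical
  have he' : Orthonormal ℝ ((↑) : ({e} : Set E) → E) :=
    orthonormal_subsingleton_iff.2 fun ⟨_, rfl⟩ => he
  obtain ⟨u, b, heu, hb⟩ := he'.exists_orthonormalBasis_extension
  set d := finrank ℝ E
  set i₀ : u := ⟨e, heu rfl⟩
  have hbi₀ : b i₀ = e := by rw [hb]
  have hcard : Fintype.card u = d := (finrank_eq_card_basis b.toBasis).symm
  have hd : 0 < √d := Real.sqrt_pos.2 (by rw [← hcard]; exact_mod_cast Fintype.card_pos_iff.2 ⟨i₀⟩)
  set r : u → ℝ := fun i => if i = i₀ then α else β / √d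
  have hsub : {x | ∀ i, |⟪b i, x - z⟫| ≤ r i} ⊆ solidCylinder z e α β := by
    intro x hx
    refine ⟨by simpa [r, hbi₀, real_inner_comm] using hx i₀, ?_⟩
    have hperp : ∀ i, |⟪b i, x - z - ⟪x - z, e⟫ • e⟫| ≤ β / √d := by
      intro i
      rw [inner_sub_right, inner_smul_right]
      by_cases hi : i = i₀
      · rw [hi, hbi₀, real_inner_self_eq_norm_sq, he, real_inner_comm]
        simp only [one_pow, mul_one, sub_self, abs_zero]
        positivity
      · rw [← hbi₀, b.inner_eq_zero hi, mul_zero, sub_zero]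
        simpa [r, hi] using hx i
    calc ‖x - z - ⟪x - z, e⟫ • e‖ ≤ √(Fintype.card u) * (β / √d) :=
          b.norm_le_sqrt_card_mul (by positivity) hperp
      _ = β := by rw [hcard]; field_simp
  calc ENNReal.ofReal (2 * α * (2 * β / √d) ^ (d - 1))
      = ENNReal.ofReal (2 * α) * ∏ i ∈ Finset.univ.erase i₀, ENNReal.ofReal (2 * (β / √d)) := by
        rw [Finset.prod_const, Finset.card_erase_of_mem (Finset.mem_univ _), Finset.card_univ,
          hcard, ENNReal.ofReal_mul' (by positivity), ENNReal.ofReal_pow (by positivity),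
          mul_div_assoc]
    _ = ∏ i, ENNReal.ofReal (2 * r i) := by
        rw [← Finset.mul_prod_erase _ _ (Finset.mem_univ i₀)]
        congr 1
        · simp [r]
        · exact Finset.prod_congr rfl fun i hi => by simp [r, Finset.ne_of_mem_erase hi]
    _ = volume {x | ∀ i, |⟪b i, x - z⟫| ≤ r i} := (b.volume_box z r).symm
    _ ≤ volume (solidCylinder z e α β) := measure_mono hsub

end Cylinder

section Curve

variable {E : Type*} [NormedAddCommGroup E] [InnerProductSpace ℝ E]

def normalDisk (γ γ' : ℝ → E) (μ t : ℝ) : Set E :=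
  {y | ‖y - γ t‖ ≤ μ ∧ ⟪y - γ t, γ' t⟫ = 0}

def normalTube (γ γ' : ℝ → E) (μ : ℝ) (s : Set ℝ) : Set E :=
  ⋃ t ∈ s, normalDisk γ γ' μ t

variable {γ γ' γ'' : ℝ → E} {s : Set ℝ}

lemma norm_sub_le_abs_sub_of_unit_speed (hs : Convex ℝ s)
    (hγ : ∀ t ∈ s, HasDerivAt γ (γ' t) t) (hunit : ∀ t ∈ s, ‖γ' t‖ = 1)
    {t₁ t₂ : ℝ} (ht₁ : t₁ ∈ s) (ht₂ : t₂ ∈ s) : ‖γ t₁ - γ t₂‖ ≤ |t₁ - t₂| := by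
  simpa using hs.norm_image_sub_le_of_norm_hasDerivWithin_le
    (fun t ht => (hγ t ht).hasDerivWithinAt) (fun t ht => (hunit t ht).le) ht₂ ht₁

lemma normalTube_subset_closedBall {a b μ : ℝ} (hγ : ∀ t ∈ Icc a b, HasDerivAt γ (γ' t) t)
    (hunit : ∀ t ∈ Icc a b, ‖γ' t‖ = 1) :
    normalTube γ γ' μ (Icc a b) ⊆ Metric.closedBall (γ a) (b - a + μ) := by
  simp only [normalTube, iUnion_subset_iff]
  rintro t ht y ⟨hy, -⟩
  have hta : ‖γ t - γ a‖ ≤ b - a :=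
    (norm_sub_le_abs_sub_of_unit_speed (convex_Icc a b) hγ hunit ht ⟨le_rfl, ht.1.trans ht.2⟩).trans
      (abs_le.2 ⟨by linarith [ht.1, ht.2], by linarith [ht.2]⟩)
  rw [Metric.mem_closedBall, dist_eq_norm]
  calc ‖y - γ a‖ ≤ ‖y - γ t‖ + ‖γ t - γ a‖ := norm_sub_le_norm_sub_add_norm_sub _ _ _
    _ ≤ b - a + μ := by linarith

lemma exists_mem_Icc_inner_sub_eq_zero {x : E} {c δ μ M₁ : ℝ}
    (hγ : ∀ t ∈ Icc (c - δ) (c + δ), HasDerivAt γ (γ' t) t)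
    (hγ' : ∀ t ∈ Icc (c - δ) (c + δ), HasDerivAt γ' (γ'' t) t)
    (hunit : ∀ t ∈ Icc (c - δ) (c + δ), ‖γ' t‖ = 1)
    (hcurv : ∀ t ∈ Icc (c - δ) (c + δ), ‖γ'' t‖ ≤ M₁)
    (hx : ∀ t ∈ Icc (c - δ) (c + δ), ‖x - γ t‖ ≤ μ) (hμM₁ : μ * M₁ ≤ 1 / 2)
    (hc : |⟪x - γ c, γ' c⟫| ≤ δ / 2) :
    ∃ t ∈ Icc (c - δ) (c + δ), ⟪x - γ t, γ' t⟫ = 0 := by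
  set g : ℝ → ℝ := fun t => ⟪x - γ t, γ' t⟫
  have hg : ∀ t ∈ Icc (c - δ) (c + δ),
      HasDerivAt g (⟪x - γ t, γ'' t⟫ + ⟪0 - γ' t, γ' t⟫) t := fun t ht =>
    ((hasDerivAt_const t x).sub (hγ t ht)).inner ℝ (hγ' t ht)
  have hcont : ContinuousOn g (Icc (c - δ) (c + δ)) := fun t ht =>
    (hg t ht).continuousAt.continuousWithinAt
  have hdiff : DifferentiableOn ℝ g (interior (Icc (c - δ) (c + δ))) := fun t ht =>
    (hg t (interior_subset ht)).differentiableAt.differentiableWithinAt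
  have hg' : ∀ t ∈ interior (Icc (c - δ) (c + δ)), deriv g t ≤ -(1 / 2) := by
    intro t ht
    have ht := interior_subset ht
    have hcurvature : ⟪x - γ t, γ'' t⟫ ≤ μ * M₁ :=
      (real_inner_le_norm _ _).trans
        (mul_le_mul (hx t ht) (hcurv t ht) (norm_nonneg _) ((norm_nonneg _).trans (hx t ht)))
    rw [(hg t ht).deriv, zero_sub, inner_neg_left, real_inner_self_eq_norm_sq, hunit t ht]
    linarith
  have hδ : 0 ≤ δ := by linarith [abs_nonneg ⟪x - γ c, γ' c⟫]
  have hl : c - δ ∈ Icc (c - δ) (c + δ) := ⟨le_rfl, by linarith⟩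
  have hm : c ∈ Icc (c - δ) (c + δ) := ⟨by linarith, by linarith⟩
  have hr : c + δ ∈ Icc (c - δ) (c + δ) := ⟨by linarith, le_rfl⟩
  have hleft := (convex_Icc _ _).image_sub_le_mul_sub_of_deriv_le hcont hdiff hg' _ hl _ hm
    (by linarith)
  have hright := (convex_Icc _ _).image_sub_le_mul_sub_of_deriv_le hcont hdiff hg' _ hm _ hr
    (by linarith)
  have hgc := abs_le.1 hc
  exact intermediate_value_Icc' (by linarith) hcont ⟨by linarith, by linarith⟩

lemma solidCylinder_subset_normalTube {c δ μ M₁ : ℝ}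
    (hγ : ∀ t ∈ Icc (c - δ) (c + δ), HasDerivAt γ (γ' t) t)
    (hγ' : ∀ t ∈ Icc (c - δ) (c + δ), HasDerivAt γ' (γ'' t) t)
    (hunit : ∀ t ∈ Icc (c - δ) (c + δ), ‖γ' t‖ = 1)
    (hcurv : ∀ t ∈ Icc (c - δ) (c + δ), ‖γ'' t‖ ≤ M₁)
    (hδμ : δ ≤ μ / 3) (hμM₁ : μ * M₁ ≤ 1 / 2) :
    solidCylinder (γ c) (γ' c) (δ / 2) (μ / 2) ⊆ normalTube γ γ' μ (Icc (c - δ) (c + δ)) := by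
  intro x hx
  have hδ : 0 ≤ δ := by linarith [abs_nonneg ⟪x - γ c, γ' c⟫, hx.1]
  have hc : c ∈ Icc (c - δ) (c + δ) := ⟨by linarith, by linarith⟩
  have hxc : ‖x - γ c‖ ≤ δ / 2 + μ / 2 := by
    simpa [dist_eq_norm] using solidCylinder_subset_closedBall (hunit c hc) _ _ hx
  have hxt : ∀ t ∈ Icc (c - δ) (c + δ), ‖x - γ t‖ ≤ μ := by
    intro t ht
    have hct : ‖γ c - γ t‖ ≤ δ :=
      (norm_sub_le_abs_sub_of_unit_speed (convex_Icc _ _) hγ hunit hc ht).trans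
        (abs_le.2 ⟨by linarith [ht.2], by linarith [ht.1]⟩)
    calc ‖x - γ t‖ ≤ ‖x - γ c‖ + ‖γ c - γ t‖ := norm_sub_le_norm_sub_add_norm_sub _ _ _
      _ ≤ μ := by linarith
  obtain ⟨t, ht, hperp⟩ :=
    exists_mem_Icc_inner_sub_eq_zero hγ hγ' hunit hcurv hxt hμM₁ hx.1
  exact mem_biUnion ht ⟨hxt t ht, hperp⟩

end Curve

lemma natCast_mul_le_of_lt_floor_div_add_one {x s : ℝ} (hx : 0 ≤ x) (hs : 0 < s) {i : ℕ}
    (hi : i < ⌊x / s⌋₊ + 1) : i * s ≤ x :=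
  (le_div_iff₀ hs).1 ((Nat.le_floor_iff (div_nonneg hx hs.le)).1 (Nat.lt_succ_iff.1 hi))

lemma le_abs_natCast_mul_sub {s : ℝ} (hs : 0 ≤ s) {i j : ℕ} (hij : i ≠ j) :
    s ≤ |i * s - j * s| := by
  have : 1 ≤ |(i : ℝ) - j| := by
    rw [← Real.dist_eq, Nat.dist_cast_real]; exact Nat.pairwise_one_le_dist hij
  rw [← sub_mul, abs_mul, abs_of_nonneg hs]
  exact le_mul_of_one_le_left hs this

lemma lt_floor_div_add_one_mul (x : ℝ) {s : ℝ} (hs : 0 < s) : x < (⌊x / s⌋₊ + 1 : ℕ) * s := by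
  rw [← div_lt_iff₀ hs]
  push_cast
  exact Nat.lt_floor_add_one _

lemma min_mul_le_natCast_mul_min {L μ M₂ : ℝ} {k : ℕ} (hL : 0 < L) (hM₂ : 0 < M₂)
    (hk₁ : 1 ≤ k) (hk : L - 2 * min (L / 2) (μ / 3) < k * (2 * μ / M₂)) :
    min (1 / 4) (M₂ / 12) * L ≤ k * min (L / 2) (μ / 3) := by
  have hk₁ : (1 : ℝ) ≤ k := by exact_mod_cast hk₁
  rcases le_total (L / 2) (μ / 3) with h | h
  · rw [min_eq_left h]
    nlinarith [min_le_left (1 / 4 : ℝ) (M₂ / 12)]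
  · rw [min_eq_right h] at hk ⊢
    have hkμ : M₂ * (L - 2 * (μ / 3)) < 2 * k * μ :=
      calc M₂ * (L - 2 * (μ / 3)) < M₂ * (k * (2 * μ / M₂)) := by gcongr
        _ = 2 * k * μ := by field_simp
    rcases le_total L (4 * μ / 3) with hL' | hL'
    · nlinarith [min_le_left (1 / 4 : ℝ) (M₂ / 12)]
    · nlinarith [min_le_right (1 / 4 : ℝ) (M₂ / 12)]

lemma MeasureTheory.card_mul_le_measure_biUnion {ι α : Type*} [MeasurableSpace α] {m : Measure α}
    {s : Finset ι} {f : ι → Set α} (hd : (s : Set ι).PairwiseDisjoint f)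
    (hm : ∀ i ∈ s, MeasurableSet (f i)) {V : ℝ≥0∞} (hV : ∀ i ∈ s, V ≤ m (f i)) :
    s.card * V ≤ m (⋃ i ∈ s, f i) := by
  rw [measure_biUnion_finset hd hm, ← nsmul_eq_mul, ← Finset.sum_const]
  exact Finset.sum_le_sum hV

section Tube

variable {E : Type*} [NormedAddCommGroup E] [InnerProductSpace ℝ E] [FiniteDimensional ℝ E]
  [MeasurableSpace E] [BorelSpace E]

theorem natCast_mul_le_volume_normalTube {γ γ' γ'' : ℝ → E} {a b δ μ M₁ : ℝ} {c : ℕ → ℝ} {k : ℕ}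
    (hδ : 0 ≤ δ) (hδμ : δ ≤ μ / 3) (hμM₁ : μ * M₁ ≤ 1 / 2)
    (hγ : ∀ t ∈ Icc a b, HasDerivAt γ (γ' t) t)
    (hγ' : ∀ t ∈ Icc a b, HasDerivAt γ' (γ'' t) t)
    (hunit : ∀ t ∈ Icc a b, ‖γ' t‖ = 1)
    (hcurv : ∀ t ∈ Icc a b, ‖γ'' t‖ ≤ M₁)
    (hc : ∀ i ∈ Finset.range k, Icc (c i - δ) (c i + δ) ⊆ Icc a b)
    (hsep : ∀ i ∈ Finset.range k, ∀ j ∈ Finset.range k, i ≠ j → δ + μ < ‖γ (c i) - γ (c j)‖) :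
    k * ENNReal.ofReal (δ * (μ / √(finrank ℝ E)) ^ (finrank ℝ E - 1))
      ≤ volume (normalTube γ γ' μ (Icc a b)) := by
  set cyl : ℕ → Set E := fun i => solidCylinder (γ (c i)) (γ' (c i)) (δ / 2) (μ / 2)
  have hcunit : ∀ i ∈ Finset.range k, ‖γ' (c i)‖ = 1 := fun i hi =>
    hunit _ (hc i hi ⟨by linarith, by linarith⟩)
  have hcyl : ∀ i ∈ Finset.range k, cyl i ⊆ normalTube γ γ' μ (Icc a b) := fun i hi =>
    (solidCylinder_subset_normalTube (fun t ht => hγ t (hc i hi ht))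
      (fun t ht => hγ' t (hc i hi ht)) (fun t ht => hunit t (hc i hi ht))
      (fun t ht => hcurv t (hc i hi ht)) hδμ hμM₁).trans
      (biUnion_subset_biUnion_left (hc i hi))
  have hdisj : (Finset.range k : Set ℕ).PairwiseDisjoint cyl := fun i hi j hj hij =>
    disjoint_solidCylinder (hcunit i hi) (hcunit j hj) (by linarith [hsep i hi j hj hij])
  calc k * ENNReal.ofReal (δ * (μ / √(finrank ℝ E)) ^ (finrank ℝ E - 1))
      = (Finset.range k).card * ENNReal.ofReal
          (2 * (δ / 2) * (2 * (μ / 2) / √(finrank ℝ E)) ^ (finrank ℝ E - 1)) := by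
        rw [Finset.card_range]; ring_nf
    _ ≤ volume (⋃ i ∈ Finset.range k, cyl i) :=
        card_mul_le_measure_biUnion hdisj
          (fun i _ => (isClosed_solidCylinder _ _ _ _).measurableSet)
          (fun i hi => ofReal_le_volume_solidCylinder _ (hcunit i hi) _ (by linarith))
    _ ≤ volume (normalTube γ γ' μ (Icc a b)) := measure_mono (iUnion₂_subset hcyl)

theorem ofReal_le_volume_normalTube {γ γ' γ'' : ℝ → E} {a b μ M₁ M₂ : ℝ} (hab : a < b)
    (hμ : 0 < μ) (hM₂ : 0 < M₂) (hμM₁ : μ * M₁ ≤ 1 / 2)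
    (hγ : ∀ t ∈ Icc a b, HasDerivAt γ (γ' t) t)
    (hγ' : ∀ t ∈ Icc a b, HasDerivAt γ' (γ'' t) t)
    (hunit : ∀ t ∈ Icc a b, ‖γ' t‖ = 1)
    (hcurv : ∀ t ∈ Icc a b, ‖γ'' t‖ ≤ M₁)
    (hbilip : ∀ t₁ ∈ Icc a b, ∀ t₂ ∈ Icc a b, M₂ * |t₁ - t₂| ≤ ‖γ t₁ - γ t₂‖) :
    ENNReal.ofReal (min (1 / 4) (M₂ / 12) * (b - a) * (μ / √(finrank ℝ E)) ^ (finrank ℝ E - 1))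
      ≤ volume (normalTube γ γ' μ (Icc a b)) := by
  set δ := min ((b - a) / 2) (μ / 3)
  set s := 2 * μ / M₂
  set k := ⌊(b - a - 2 * δ) / s⌋₊ + 1
  set c : ℕ → ℝ := fun i => a + δ + i * s
  have hδ : 0 < δ := lt_min (by linarith) (by positivity)
  have hs : 0 < s := by positivity
  have hc : ∀ i ∈ Finset.range k, Icc (c i - δ) (c i + δ) ⊆ Icc a b := by
    intro i hi
    have := natCast_mul_le_of_lt_floor_div_add_one
      (by linarith [min_le_left ((b - a) / 2) (μ / 3)]) hs (Finset.mem_range.1 hi)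
    have := mul_nonneg (Nat.cast_nonneg i) hs.le
    exact Icc_subset_Icc (by simp only [c]; linarith) (by simp only [c]; linarith)
  have hcmem : ∀ i ∈ Finset.range k, c i ∈ Icc a b := fun i hi =>
    hc i hi ⟨by linarith, by linarith⟩
  have hsep : ∀ i ∈ Finset.range k, ∀ j ∈ Finset.range k, i ≠ j →
      δ + μ < ‖γ (c i) - γ (c j)‖ := by
    intro i hi j hj hij
    calc δ + μ < M₂ * s := by
          simp only [s]; field_simp; linarith [min_le_right ((b - a) / 2) (μ / 3)]
      _ ≤ M₂ * |c i - c j| := by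
          gcongr
          simpa only [c, add_sub_add_left_eq_sub] using le_abs_natCast_mul_sub hs.le hij
      _ ≤ ‖γ (c i) - γ (c j)‖ := hbilip _ (hcmem i hi) _ (hcmem j hj)
  have hcount := min_mul_le_natCast_mul_min (sub_pos.2 hab) hM₂ (Nat.le_add_left 1 _)
    (lt_floor_div_add_one_mul _ hs)
  refine le_trans ?_ (natCast_mul_le_volume_normalTube hδ.le (min_le_right _ _) hμM₁ hγ hγ'
    hunit hcurv hc hsep)
  rw [← ENNReal.ofReal_natCast, ← ENNReal.ofReal_mul (by positivity), ← mul_assoc]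
  gcongr

end Tube

/-- Tube lemma: the union of small normal disks of radius `μ` along a unit-speed bi-Lipschitz
curve with bounded curvature has `n`-dimensional measure at least `C μ^(n−1)` times the chord
length, with constants depending only on `M₁`, `M₂` and `n`. -/
theorem normal_tube_measure_lower_bound (n : ℕ) (M₁ M₂ : ℝ) (hM₁ : 0 < M₁) (hM₂ : 0 < M₂) :
    ∃ μ₀ > (0 : ℝ), ∃ C > (0 : ℝ),
      ∀ (a b : ℝ), a < b →
      ∀ (γ γ' γ'' : ℝ → EuclideanSpace ℝ (Fin n)),
        (∀ t ∈ Set.Icc a b, HasDerivAt γ (γ' t) t) →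
        (∀ t ∈ Set.Icc a b, HasDerivAt γ' (γ'' t) t) →
        (∀ t ∈ Set.Icc a b, ‖γ' t‖ = 1) →
        (∀ t ∈ Set.Icc a b, ‖γ'' t‖ ≤ M₁) →
        (∀ t₁ ∈ Set.Icc a b, ∀ t₂ ∈ Set.Icc a b, M₂ * |t₁ - t₂| ≤ ‖γ t₁ - γ t₂‖) →
        ∀ μ : ℝ, 0 < μ → μ ≤ μ₀ →
          C * μ ^ (n - 1) * ‖γ b - γ a‖ ≤
            (MeasureTheory.volume (⋃ t ∈ Set.Icc a b,
              {y : EuclideanSpace ℝ (Fin n) |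
                ‖y - γ t‖ ≤ μ ∧ ⟪y - γ t, γ' t⟫ = 0})).toReal := by
  refine ⟨1 / (2 * M₁), by positivity, min (1 / 4) (M₂ / 12) / √n ^ (n - 1),
    div_pos (by positivity) (by rcases n with _ | n <;> simp [pow_pos, Nat.cast_add_one_pos]), ?_⟩
  intro a b hab γ γ' γ'' hγ hγ' hunit hcurv hbilip μ hμ hμ₀
  have hμM₁ : μ * M₁ ≤ 1 / 2 := by
    rw [le_div_iff₀ (by positivity)] at hμ₀; linarith
  have hchord : ‖γ b - γ a‖ ≤ b - a := by
    simpa [abs_of_pos (sub_pos.2 hab)] using norm_sub_le_abs_sub_of_unit_speed (convex_Icc a b)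
      hγ hunit (right_mem_Icc.2 hab.le) (left_mem_Icc.2 hab.le)
  have hvol := ofReal_le_volume_normalTube hab hμ hM₂ hμM₁ hγ hγ' hunit hcurv hbilip
  rw [finrank_euclideanSpace_fin] at hvol
  have hfin : volume (normalTube γ γ' μ (Icc a b)) ≠ ⊤ :=
    ((measure_mono (normalTube_subset_closedBall hγ hunit)).trans_lt
      measure_closedBall_lt_top).ne
  refine (ENNReal.ofReal_le_iff_le_toReal hfin).1 (le_trans (ENNReal.ofReal_le_ofReal ?_) hvol)
  calc min (1 / 4) (M₂ / 12) / √n ^ (n - 1) * μ ^ (n - 1) * ‖γ b - γ a‖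
      ≤ min (1 / 4) (M₂ / 12) / √n ^ (n - 1) * μ ^ (n - 1) * (b - a) := by gcongr
    _ = min (1 / 4) (M₂ / 12) * (b - a) * (μ / √n) ^ (n - 1) := by ring
end

section
/- Let 0 < κ < 1, M > 0, R > 0 and let x₀, m̄, m̂ be unit vectors in ℝⁿ with positive n-th coordinates, m̄·x₀ ≥ κ, m̂·x₀ ≥ κ, and |x₀′|/x₀ₙ ≤ R/M (where x₀ = (x₀′, x₀ₙ)). Let X₀ ∈ ℝⁿ with X₀ = |X₀|x₀ and Xₙ⁰ < M, and suppose Ȳ = X₀ + s̄m̄ and Ŷ = X₀ + ŝm̂ satisfy Ȳₙ = Ŷₙ = M, |Ȳ′| ≤ R, |Ŷ′| ≤ R. Let m = (1/κ)x₀ + β̄(m̄ − (1/κ)x₀) + β̂(m̂ − (1/κ)x₀) be a unit vector with β̄, β̂ ≥ 0, β̄ + β̂ ≤ 1, and mₙ > 0. Then the point Y = X₀ + ((M − Xₙ⁰)/mₙ)·m satisfies Yₙ = M and |Y′| ≤ R. -/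
/-!
Central projection from `X₀` onto the hyperplane `{Yₙ = M}` sends a nonnegative combination
`∑ cᵢ uᵢ` of upward directions to the convex combination of the images of the `uᵢ` with weights
`cᵢ (uᵢ)ₙ / (∑ cⱼ uⱼ)ₙ`. Now `m = ((1 - β̄ - β̂)/κ) x₀ + β̄ m̄ + β̂ m̂`; the images of `m̄` and `m̂` are
`Ȳ` and `Ŷ`, and since `X₀` lies on the line through `x₀`, the image of `x₀` is `(M/x₀ₙ) x₀`, whose
`|·′|` is at most `R` by the slope bound on `x₀`. So `Y` lies in the convex set `{|Y′| ≤ R}`.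
-/

open scoped RealInnerProductSpace

/-- The norm `|Y′|` of the vector of the first `n` coordinates of `Y ∈ ℝ^{n+1}`. -/
noncomputable def primeNorm {n : ℕ} (Y : EuclideanSpace ℝ (Fin (n + 1))) : ℝ :=
  Real.sqrt (∑ i : Fin n, (Y i.castSucc) ^ 2)

section CentralProjection

variable {E : Type*} [AddCommGroup E] [Module ℝ E] (ℓ : E →ₗ[ℝ] ℝ) (X : E) (M : ℝ)

noncomputable def rayHit (v : E) : E := X + ((M - ℓ X) / ℓ v) • v

variable {ℓ X M}

theorem apply_rayHit {v : E} (hv : ℓ v ≠ 0) : ℓ (rayHit ℓ X M v) = M := by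
  simp only [rayHit, map_add, map_smul, smul_eq_mul]
  field_simp
  ring

theorem rayHit_eq_of_apply_eq {u : E} {s : ℝ} (hu : ℓ u ≠ 0) (hs : ℓ (X + s • u) = M) :
    rayHit ℓ X M u = X + s • u := by
  simp only [map_add, map_smul, smul_eq_mul] at hs
  rw [rayHit, ← hs]
  congr 2
  field_simp
  ring

theorem rayHit_smul_self {x : E} (t : ℝ) (hx : ℓ x ≠ 0) :
    rayHit ℓ (t • x) M x = (M / ℓ x) • x := by
  rw [rayHit, ← add_smul, map_smul, smul_eq_mul]
  congr 1
  field_simp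
  ring

theorem rayHit_sum {ι : Type*} {s : Finset ι} {c : ι → ℝ} {u : ι → E}
    (hv : ℓ (∑ i ∈ s, c i • u i) ≠ 0) (hu : ∀ i ∈ s, ℓ (u i) ≠ 0) :
    rayHit ℓ X M (∑ i ∈ s, c i • u i) =
      ∑ i ∈ s, (c i * ℓ (u i) / ℓ (∑ j ∈ s, c j • u j)) • rayHit ℓ X M (u i) := by
  set v := ∑ i ∈ s, c i • u i
  have hℓv : ∑ i ∈ s, c i * ℓ (u i) = ℓ v := by simp [v, map_sum]
  have hterm : ∀ i ∈ s, (c i * ℓ (u i) / ℓ v) • rayHit ℓ X M (u i) =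
      (c i * ℓ (u i) / ℓ v) • X + ((M - ℓ X) / ℓ v) • (c i • u i) := by
    intro i hi
    rw [rayHit, smul_add, smul_smul, smul_smul]
    congr 2
    field_simp [hu i hi]
  rw [Finset.sum_congr rfl hterm, Finset.sum_add_distrib, ← Finset.sum_smul, ← Finset.smul_sum,
    ← Finset.sum_div, hℓv, div_self hv, one_smul, rayHit]

theorem rayHit_sum_mem {ι : Type*} {s : Finset ι} {c : ι → ℝ} {u : ι → E} {S : Set E}
    (hS : Convex ℝ S) (hc : ∀ i ∈ s, 0 ≤ c i) (hu : ∀ i ∈ s, 0 < ℓ (u i))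
    (hv : 0 < ℓ (∑ i ∈ s, c i • u i)) (hmem : ∀ i ∈ s, rayHit ℓ X M (u i) ∈ S) :
    rayHit ℓ X M (∑ i ∈ s, c i • u i) ∈ S := by
  rw [rayHit_sum hv.ne' fun i hi => (hu i hi).ne']
  refine hS.sum_mem
    (fun i hi => div_nonneg (mul_nonneg (hc i hi) (hu i hi).le) hv.le) ?_ hmem
  rw [← Finset.sum_div, div_eq_one_iff_eq hv.ne']
  simp [map_sum]

end CentralProjection

noncomputable def primeProj (n : ℕ) :
    EuclideanSpace ℝ (Fin (n + 1)) →ₗ[ℝ] EuclideanSpace ℝ (Fin n) :=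
  (WithLp.linearEquiv 2 ℝ (Fin n → ℝ)).symm.toLinearMap ∘ₗ
    LinearMap.funLeft ℝ ℝ Fin.castSucc ∘ₗ (WithLp.linearEquiv 2 ℝ (Fin (n + 1) → ℝ)).toLinearMap

theorem primeNorm_eq_norm_primeProj {n : ℕ} (Y : EuclideanSpace ℝ (Fin (n + 1))) :
    primeNorm Y = ‖primeProj n Y‖ := by
  simp [primeNorm, EuclideanSpace.norm_eq, primeProj, LinearMap.funLeft]

theorem convex_setOf_primeNorm_le (n : ℕ) (R : ℝ) :
    Convex ℝ {Y : EuclideanSpace ℝ (Fin (n + 1)) | primeNorm Y ≤ R} := by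
  have := (convex_closedBall (0 : EuclideanSpace ℝ (Fin n)) R).linear_preimage (primeProj n)
  simpa only [primeNorm_eq_norm_primeProj, Set.preimage, mem_closedBall_zero_iff] using this

theorem primeNorm_smul {n : ℕ} (c : ℝ) (Y : EuclideanSpace ℝ (Fin (n + 1))) :
    primeNorm (c • Y) = |c| * primeNorm Y := by
  rw [primeNorm_eq_norm_primeProj, primeNorm_eq_norm_primeProj, map_smul, norm_smul,
    Real.norm_eq_abs]

theorem primeNorm_smul_le_of_div_le {n : ℕ} {M R : ℝ} {x : EuclideanSpace ℝ (Fin (n + 1))}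
    (hM : 0 < M) (hx : 0 < x (Fin.last n)) (h : primeNorm x / x (Fin.last n) ≤ R / M) :
    primeNorm ((M / x (Fin.last n)) • x) ≤ R := by
  rw [primeNorm_smul, abs_of_pos (div_pos hM hx), div_mul_eq_mul_div, div_le_iff₀ hx]
  rw [div_le_div_iff₀ hx hM] at h
  linarith

theorem flat_disk_target_convexity_general {n : ℕ} (κ M R : ℝ)
    (hκ0 : 0 < κ) (hM : 0 < M)
    (x₀ mbar mhat : EuclideanSpace ℝ (Fin (n + 1)))
    (hx₀n : 0 < x₀ (Fin.last n)) (hmbarn : 0 < mbar (Fin.last n))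
    (hmhatn : 0 < mhat (Fin.last n))
    (hx₀prime : primeNorm x₀ / x₀ (Fin.last n) ≤ R / M)
    (X₀ : EuclideanSpace ℝ (Fin (n + 1))) (hX₀ : X₀ = ‖X₀‖ • x₀)
    (sbar shat : ℝ)
    (Ybar Yhat : EuclideanSpace ℝ (Fin (n + 1)))
    (hYbar : Ybar = X₀ + sbar • mbar) (hYhat : Yhat = X₀ + shat • mhat)
    (hYbarn : Ybar (Fin.last n) = M) (hYhatn : Yhat (Fin.last n) = M)
    (hYbarprime : primeNorm Ybar ≤ R) (hYhatprime : primeNorm Yhat ≤ R)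
    (βbar βhat : ℝ) (hβbar : 0 ≤ βbar) (hβhat : 0 ≤ βhat) (hβsum : βbar + βhat ≤ 1)
    (m : EuclideanSpace ℝ (Fin (n + 1)))
    (hm : m = κ⁻¹ • x₀ + βbar • (mbar - κ⁻¹ • x₀) + βhat • (mhat - κ⁻¹ • x₀))
    (hmn : 0 < m (Fin.last n))
    (Y : EuclideanSpace ℝ (Fin (n + 1)))
    (hY : Y = X₀ + ((M - X₀ (Fin.last n)) / m (Fin.last n)) • m) :
    Y (Fin.last n) = M ∧ primeNorm Y ≤ R := by
  let ℓ : EuclideanSpace ℝ (Fin (n + 1)) →ₗ[ℝ] ℝ := (EuclideanSpace.proj (Fin.last n)).toLinearMap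
  have hYhit : Y = rayHit ℓ X₀ M m := hY
  have hmsum : m = ∑ i, ![(1 - βbar - βhat) / κ, βbar, βhat] i • ![x₀, mbar, mhat] i := by
    rw [hm, Fin.sum_univ_three]
    simp only [Matrix.cons_val_zero, Matrix.cons_val_one, Matrix.cons_val_two, Matrix.tail_cons,
      Matrix.head_cons]
    module
  refine ⟨hYhit ▸ apply_rayHit (ℓ := ℓ) hmn.ne', ?_⟩
  rw [hYhit, hmsum]
  refine rayHit_sum_mem (convex_setOf_primeNorm_le n R) ?_ ?_ (hmsum ▸ hmn) ?_
  · have hc₀ : 0 ≤ (1 - βbar - βhat) / κ := div_nonneg (by linarith) hκ0.le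
    intro i _
    fin_cases i <;> assumption
  · intro i _
    fin_cases i <;> assumption
  · intro i _
    fin_cases i
    · show primeNorm (rayHit ℓ X₀ M x₀) ≤ R
      rw [hX₀, rayHit_smul_self _ hx₀n.ne']
      exact primeNorm_smul_le_of_div_le hM hx₀n hx₀prime
    · show primeNorm (rayHit ℓ X₀ M mbar) ≤ R
      rwa [rayHit_eq_of_apply_eq hmbarn.ne' (hYbar ▸ hYbarn), ← hYbar]
    · show primeNorm (rayHit ℓ X₀ M mhat) ≤ R
      rwa [rayHit_eq_of_apply_eq hmhatn.ne' (hYhat ▸ hYhatn), ← hYhat]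

/-- The flat disk target `Σ = {(Y′, M) : |Y′| ≤ R}` is convex with respect to the curves
`[m̄, m̂]_{x₀}`: any point `m` on the spherical curve joining `m̄` and `m̂` through the external
point `x₀/κ` gives a ray `X₀ + s·m` that hits the disk. -/
theorem flat_disk_target_convexity {n : ℕ} (κ M R : ℝ)
    (hκ0 : 0 < κ) (hκ1 : κ < 1) (hM : 0 < M) (hR : 0 < R)
    (x₀ mbar mhat : EuclideanSpace ℝ (Fin (n + 1)))
    (hx₀ : ‖x₀‖ = 1) (hmbar : ‖mbar‖ = 1) (hmhat : ‖mhat‖ = 1)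
    (hx₀n : 0 < x₀ (Fin.last n)) (hmbarn : 0 < mbar (Fin.last n))
    (hmhatn : 0 < mhat (Fin.last n))
    (hangbar : ⟪mbar, x₀⟫ ≥ κ) (hanghat : ⟪mhat, x₀⟫ ≥ κ)
    (hx₀prime : primeNorm x₀ / x₀ (Fin.last n) ≤ R / M)
    (X₀ : EuclideanSpace ℝ (Fin (n + 1))) (hX₀ : X₀ = ‖X₀‖ • x₀)
    (hX₀n : X₀ (Fin.last n) < M)
    (sbar shat : ℝ)
    (Ybar Yhat : EuclideanSpace ℝ (Fin (n + 1)))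
    (hYbar : Ybar = X₀ + sbar • mbar) (hYhat : Yhat = X₀ + shat • mhat)
    (hYbarn : Ybar (Fin.last n) = M) (hYhatn : Yhat (Fin.last n) = M)
    (hYbarprime : primeNorm Ybar ≤ R) (hYhatprime : primeNorm Yhat ≤ R)
    (βbar βhat : ℝ) (hβbar : 0 ≤ βbar) (hβhat : 0 ≤ βhat) (hβsum : βbar + βhat ≤ 1)
    (m : EuclideanSpace ℝ (Fin (n + 1)))
    (hm : m = κ⁻¹ • x₀ + βbar • (mbar - κ⁻¹ • x₀) + βhat • (mhat - κ⁻¹ • x₀))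
    (hmunit : ‖m‖ = 1) (hmn : 0 < m (Fin.last n))
    (Y : EuclideanSpace ℝ (Fin (n + 1)))
    (hY : Y = X₀ + ((M - X₀ (Fin.last n)) / m (Fin.last n)) • m) :
    Y (Fin.last n) = M ∧ primeNorm Y ≤ R :=
  flat_disk_target_convexity_general κ M R hκ0 hM x₀ mbar mhat hx₀n hmbarn hmhatn hx₀prime X₀ hX₀
    sbar shat Ybar Yhat hYbar hYhat hYbarn hYhatn hYbarprime hYhatprime βbar βhat hβbar hβhat hβsum
    m hm hmn Y hY
end
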